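/- Let E be a nonempty finite type with a probability measure μ, let n ≥ 3 be an integer, and let P be the product probability measure on Ω = (ZMod (2n) → E), so the coordinates ω(j), j ∈ ZMod(2n), are i.i.d. with law μ. Let f, g, b : E × E → ℝ be symmetric functions (f(x,y) = f(y,x), g(x,y) = g(y,x), b(x,y) = b(y,x)) and c₊, c₋ ∈ ℝ. For i ∈ ZMod n define U_i(ω) = f(ω(2i−1), ω(2i)), V_i(ω) = g(ω(2i), ω(2i+1)), β⁺_i(ω) = b(ω(2i), ω(2i+2)), β⁻_i(ω) = b(ω(2i−1), ω(2i+1)), indices in ZMod(2n), and set Ū = E[U_0], V̄ = E[V_0], β̄ = E[β⁺_0]. Then Var( Σ_{i ∈ ZMod n} (U_i + V_i + c₊·β⁺_i + c₋·β⁻_i) ) = n·[ σ_uu + σ_vv + 2σ_uv + (c₊² + c₋²)·σ_ββ + 2(c₊ + c₋)·(σ_βu + σ_βv) ], where σ_uu = Var(U_0), σ_vv = Var(V_0), σ_uv = E[(U_0 − Ū)(V_0 + V_{−1} − 2V̄)], σ_ββ = E[(β⁺_0 − β̄)(β⁺_{−1} + β⁺_0 + β⁺_1 − 3β̄)], σ_βu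 = E[(U_0 − Ū)(β⁺_{−1} + β⁺_0 − 2β̄)], and σ_βv = E[(V_0 − V̄)(β⁺_{−1} + β⁺_0 − 2β̄)]. -/

import Mathlib

/-!
Write `S_U, S_V, S_±` for the sums of the four bond families over the blocks. The reflection
`j ↦ -1 - j` of the ring fixes `S_U` and `S_V` and exchanges `S_+` and `S_-`, the translation
`j ↦ j - 1` carries `S_+` to `S_-`, and `S_+`, `S_-` depend on disjoint sets of sites (the even
and the odd ones), so the variance reduces to the six covariances among `S_U, S_V, S_+`.
Since the product measure is invariant under the shift by two sites, each of these is `n` times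
the sum of the covariances between a bond of block `0` and the bonds of the blocks `d`, and only
the blocks `d` sharing a site with block `0` contribute.
-/

open MeasureTheory ProbabilityTheory

theorem MeasureTheory.MeasurePreserving.covariance_comp {Ω Ω' : Type*} [MeasurableSpace Ω]
    [MeasurableSpace Ω'] {μ : Measure Ω'} {ν : Measure Ω} {T : Ω' → Ω}
    (hT : MeasurePreserving T μ ν) {X Y : Ω → ℝ} (hX : AEStronglyMeasurable X ν)
    (hY : AEStronglyMeasurable Y ν) :
    cov[X ∘ T, Y ∘ T; μ] = cov[X, Y; ν] := by
  rw [← hT.map_eq] at hX hY ⊢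
  exact (covariance_map hX hY hT.aemeasurable).symm

theorem MeasureTheory.MeasurePreserving.integral_comp_of_aestronglyMeasurable {Ω Ω' : Type*}
    [MeasurableSpace Ω] [MeasurableSpace Ω'] {μ : Measure Ω'} {ν : Measure Ω} {T : Ω' → Ω}
    (hT : MeasurePreserving T μ ν) {X : Ω → ℝ} (hX : AEStronglyMeasurable X ν) :
    ∫ ω, (X ∘ T) ω ∂μ = ∫ ω, X ω ∂ν := by
  rw [← hT.map_eq] at hX ⊢
  exact (integral_map hT.aemeasurable hX).symm

theorem integral_sub_mul_sum_sub {Ω κ : Type*} [MeasurableSpace Ω] {P : Measure Ω}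
    [IsProbabilityMeasure P] {X : Ω → ℝ} {Y : κ → Ω → ℝ} (s : Finset κ) {m : ℝ}
    (hX : MemLp X 2 P) (hY : ∀ d ∈ s, MemLp (Y d) 2 P) (hm : ∀ d ∈ s, ∫ ω, Y d ω ∂P = m) :
    ∫ ω, (X ω - ∫ ω', X ω' ∂P) * (∑ d ∈ s, Y d ω - s.card * m) ∂P
      = ∑ d ∈ s, cov[X, Y d; P] := by
  rw [← covariance_fun_sum_right' hY hX, covariance,
    integral_finsetSum s fun d hd => (hY d hd).integrable one_le_two, Finset.sum_congr rfl hm,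
    Finset.sum_const, nsmul_eq_mul]

def pairObs {ι κ E : Type*} (F : E × E → ℝ) (p q : κ → ι) (i : κ) (ω : ι → E) : ℝ :=
  F (ω (p i), ω (q i))

theorem pairObs_comp_addRight {E G H : Type*} [AddGroup G] [AddCommGroup H] (φ : G →+ H)
    {p q : G → H} (hp : ∀ i k, p (i + k) = p i + φ k) (hq : ∀ i k, q (i + k) = q i + φ k)
    (F : E × E → ℝ) (i k : G) :
    pairObs F p q i ∘ (fun ω : H → E => ω ∘ Equiv.addRight (φ k)) = pairObs F p q (i + k) := by
  ext ω
  simp [pairObs, hp, hq]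

section ProductMeasure

variable {ι E : Type*} [Fintype ι] [MeasurableSpace E] (μ : Measure E)

theorem measurePreserving_comp_equiv [SigmaFinite μ] (e : ι ≃ ι) :
    MeasurePreserving (fun ω : ι → E => ω ∘ e) (Measure.pi fun _ => μ)
      (Measure.pi fun _ => μ) :=
  measurePreserving_arrowCongr' _ _ e.symm (MeasurableEquiv.refl E)
    fun _ => MeasurePreserving.id μ

theorem covariance_pairObs_eq_zero [IsProbabilityMeasure μ] {κ : Type*} {F G : E × E → ℝ}
    (hF : Measurable F) (hG : Measurable G) {p q p' q' : κ → ι} {i j : κ}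
    (h₁ : p i ≠ p' j) (h₂ : p i ≠ q' j) (h₃ : q i ≠ p' j) (h₄ : q i ≠ q' j)
    (hX : MemLp (pairObs F p q i) 2 (Measure.pi fun _ => μ))
    (hY : MemLp (pairObs G p' q' j) 2 (Measure.pi fun _ => μ)) :
    cov[pairObs F p q i, pairObs G p' q' j; Measure.pi fun _ => μ] = 0 := by
  have hcoord : iIndepFun (fun k (ω : ι → E) => ω k) (Measure.pi fun _ => μ) :=
    iIndepFun_pi (X := fun _ => id) fun _ => aemeasurable_id
  exact ((hcoord.indepFun_prodMk_prodMk (fun k => measurable_pi_apply k) _ _ _ _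
    h₁ h₂ h₃ h₄).comp hF hG).covariance_eq_zero hX hY

end ProductMeasure

section Stationary

variable {G Ω : Type*} [AddCommGroup G] [MeasurableSpace Ω] {P : Measure Ω} {T : G → Ω → Ω}
  {X Y : G → Ω → ℝ}

theorem integral_stationary (hT : ∀ k, MeasurePreserving (T k) P P)
    (hXT : ∀ i k, X i ∘ T k = X (i + k)) (hX : AEStronglyMeasurable (X 0) P) (i : G) :
    ∫ ω, X i ω ∂P = ∫ ω, X 0 ω ∂P := by
  rw [← zero_add i, ← hXT, (hT i).integral_comp_of_aestronglyMeasurable hX]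

variable [Fintype G] [IsFiniteMeasure P]

theorem covariance_sum_sum_of_stationary (hT : ∀ k, MeasurePreserving (T k) P P)
    (hXT : ∀ i k, X i ∘ T k = X (i + k)) (hYT : ∀ i k, Y i ∘ T k = Y (i + k))
    (hX : ∀ i, MemLp (X i) 2 P) (hY : ∀ i, MemLp (Y i) 2 P)
    (D : Finset G) (hD : ∀ d ∉ D, cov[X 0, Y d; P] = 0) :
    cov[∑ i, X i, ∑ j, Y j; P] = Fintype.card G * ∑ d ∈ D, cov[X 0, Y d; P] := by
  have hshift : ∀ i j, cov[X i, Y j; P] = cov[X 0, Y (j - i); P] := fun i j => by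
    rw [← (hT i).covariance_comp (hX 0).aestronglyMeasurable (hY _).aestronglyMeasurable,
      hXT, hYT, zero_add, sub_add_cancel]
  rw [covariance_sum_sum hX hY, Finset.sum_subset (Finset.subset_univ D) fun d _ hd => hD d hd]
  rw [Fintype.sum_congr _ _ fun i => (Fintype.sum_congr _ _ (hshift i)).trans
      (Fintype.sum_equiv (Equiv.subRight i) _ (fun d => cov[X 0, Y d; P]) fun _ => rfl),
    Finset.sum_const, Finset.card_univ, nsmul_eq_mul]

end Stationary

section Sites

variable (n : ℕ)

def evenSite : ZMod n →+ ZMod (2 * n) :=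
  ZMod.lift n ⟨zmultiplesHom _ 2, by simpa [mul_comm] using ZMod.natCast_self (2 * n)⟩

theorem evenSite_intCast (x : ℤ) : evenSite n x = 2 * x := by
  simp [evenSite, ZMod.lift_coe, mul_comm]

@[simp] theorem evenSite_one : evenSite n 1 = 2 := by
  simpa using evenSite_intCast n 1

variable [NeZero n]

theorem evenSite_apply (i : ZMod n) : evenSite n i = 2 * (i.val : ZMod (2 * n)) := by
  simpa using evenSite_intCast n i.val

theorem evenSite_injective : Function.Injective (evenSite n) := by
  refine (injective_iff_map_eq_zero _).2 fun i hi => ?_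
  rw [evenSite_apply, show (2 : ZMod (2 * n)) * i.val = (2 * i.val : ℕ) by push_cast; rfl,
    ZMod.natCast_eq_zero_iff, Nat.mul_dvd_mul_iff_left two_pos] at hi
  exact (ZMod.val_eq_zero i).1 (Nat.eq_zero_of_dvd_of_lt hi (ZMod.val_lt i))

@[simp, grind =] theorem evenSite_inj {i j : ZMod n} : evenSite n i = evenSite n j ↔ i = j :=
  (evenSite_injective n).eq_iff

@[simp, grind .] theorem evenSite_ne_add_one (i j : ZMod n) :
    evenSite n i ≠ evenSite n j + 1 := by
  intro h
  have := congrArg (ZMod.castHom (dvd_mul_right 2 n) (ZMod 2)) h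
  simp only [evenSite_apply, map_add, map_mul, map_one, map_ofNat,
    show (2 : ZMod 2) = 0 from rfl, zero_mul, zero_add] at this
  exact zero_ne_one this

theorem evenSite_sub_one_add_one (i : ZMod n) :
    evenSite n (i - 1) + 1 = 2 * (i.val : ZMod (2 * n)) - 1 := by
  rw [map_sub, evenSite_one, evenSite_apply]
  ring

theorem evenSite_add_one (i : ZMod n) : evenSite n (i + 1) = 2 * (i.val : ZMod (2 * n)) + 2 := by
  rw [map_add, evenSite_one, evenSite_apply]

@[simp, grind .] theorem add_one_ne_evenSite (i j : ZMod n) : evenSite n i + 1 ≠ evenSite n j :=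
  (evenSite_ne_add_one n j i).symm

end Sites

section Bonds

variable {E : Type*} (n : ℕ)

-- The bonds `U_i, V_i, β⁺_i, β⁻_i` of block `i`; the odd site `2 j + 1` is written
-- `evenSite n j + 1`. They are abbreviations so that the lemmas on `pairObs` rewrite them.
abbrev oddEvenBond (f : E × E → ℝ) : ZMod n → (ZMod (2 * n) → E) → ℝ :=
  pairObs f (fun i => evenSite n (i - 1) + 1) (evenSite n)

abbrev evenOddBond (g : E × E → ℝ) : ZMod n → (ZMod (2 * n) → E) → ℝ :=
  pairObs g (evenSite n) (fun i => evenSite n i + 1)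

abbrev evenEvenBond (b : E × E → ℝ) : ZMod n → (ZMod (2 * n) → E) → ℝ :=
  pairObs b (evenSite n) (fun i => evenSite n (i + 1))

abbrev oddOddBond (b : E × E → ℝ) : ZMod n → (ZMod (2 * n) → E) → ℝ :=
  pairObs b (fun i => evenSite n (i - 1) + 1) (fun i => evenSite n i + 1)

variable {n}

theorem oddEvenBond_comp_addRight (f : E × E → ℝ) (i k : ZMod n) :
    oddEvenBond n f i ∘ (· ∘ Equiv.addRight (evenSite n k)) = oddEvenBond n f (i + k) :=
  pairObs_comp_addRight _ (fun i k => by rw [add_sub_right_comm, map_add]; abel)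
    (fun i k => map_add _ i k) f i k

theorem evenOddBond_comp_addRight (g : E × E → ℝ) (i k : ZMod n) :
    evenOddBond n g i ∘ (· ∘ Equiv.addRight (evenSite n k)) = evenOddBond n g (i + k) :=
  pairObs_comp_addRight _ (fun i k => map_add _ i k)
    (fun i k => by rw [map_add]; abel) g i k

theorem evenEvenBond_comp_addRight (b : E × E → ℝ) (i k : ZMod n) :
    evenEvenBond n b i ∘ (· ∘ Equiv.addRight (evenSite n k)) = evenEvenBond n b (i + k) :=
  pairObs_comp_addRight _ (fun i k => map_add _ i k)
    (fun i k => by rw [add_right_comm, map_add]) b i k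

theorem oddOddBond_comp_addRight (b : E × E → ℝ) (i k : ZMod n) :
    oddOddBond n b i ∘ (· ∘ Equiv.addRight (evenSite n k)) = oddOddBond n b (i + k) :=
  pairObs_comp_addRight _ (fun i k => by rw [add_sub_right_comm, map_add]; abel)
    (fun i k => by rw [map_add]; abel) b i k

variable [NeZero n]

theorem oddEvenBond_apply (f : E × E → ℝ) (i : ZMod n) (ω : ZMod (2 * n) → E) :
    oddEvenBond n f i ω
      = f (ω (2 * (i.val : ZMod (2 * n)) - 1), ω (2 * (i.val : ZMod (2 * n)))) := by
  rw [oddEvenBond, pairObs, evenSite_sub_one_add_one, evenSite_apply]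

theorem evenOddBond_apply (g : E × E → ℝ) (i : ZMod n) (ω : ZMod (2 * n) → E) :
    evenOddBond n g i ω
      = g (ω (2 * (i.val : ZMod (2 * n))), ω (2 * (i.val : ZMod (2 * n)) + 1)) := by
  rw [evenOddBond, pairObs, evenSite_apply]

theorem evenEvenBond_apply (b : E × E → ℝ) (i : ZMod n) (ω : ZMod (2 * n) → E) :
    evenEvenBond n b i ω
      = b (ω (2 * (i.val : ZMod (2 * n))), ω (2 * (i.val : ZMod (2 * n)) + 2)) := by
  rw [evenEvenBond, pairObs, evenSite_add_one, evenSite_apply]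

theorem oddOddBond_apply (b : E × E → ℝ) (i : ZMod n) (ω : ZMod (2 * n) → E) :
    oddOddBond n b i ω
      = b (ω (2 * (i.val : ZMod (2 * n)) - 1), ω (2 * (i.val : ZMod (2 * n)) + 1)) := by
  rw [oddOddBond, pairObs, evenSite_sub_one_add_one, evenSite_apply]

theorem sum_evenEvenBond_comp_subRight_one (b : E × E → ℝ) :
    (∑ i, evenEvenBond n b i) ∘ (· ∘ Equiv.subRight 1) = ∑ i, oddOddBond n b i := by
  ext ω
  simp only [Function.comp_apply, Finset.sum_apply, evenEvenBond, oddOddBond, pairObs,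
    Equiv.subRight_apply, map_add, map_sub, evenSite_one]
  congr! 4 <;> ring

theorem sum_oddEvenBond_comp_reflect {f : E × E → ℝ} (hf : ∀ x y, f (x, y) = f (y, x)) :
    (∑ i, oddEvenBond n f i) ∘ (· ∘ Equiv.subLeft (-1)) = ∑ i, oddEvenBond n f i := by
  ext ω
  simp only [Function.comp_apply, Finset.sum_apply]
  refine Fintype.sum_equiv (Equiv.neg _) _ _ fun i => ?_
  simp only [oddEvenBond, pairObs, Function.comp_apply, Equiv.subLeft_apply, Equiv.neg_apply,
    map_sub, map_neg, evenSite_one]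
  rw [hf]
  congr! 3 <;> ring

theorem sum_evenOddBond_comp_reflect {g : E × E → ℝ} (hg : ∀ x y, g (x, y) = g (y, x)) :
    (∑ i, evenOddBond n g i) ∘ (· ∘ Equiv.subLeft (-1)) = ∑ i, evenOddBond n g i := by
  ext ω
  simp only [Function.comp_apply, Finset.sum_apply]
  refine Fintype.sum_equiv ((Equiv.neg _).trans (Equiv.subRight 1)) _ _ fun i => ?_
  simp only [evenOddBond, pairObs, Function.comp_apply, Equiv.subLeft_apply, Equiv.trans_apply,
    Equiv.neg_apply, Equiv.subRight_apply, map_sub, map_neg, evenSite_one]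
  rw [hg]
  congr! 3 <;> ring

theorem sum_evenEvenBond_comp_reflect {b : E × E → ℝ} (hb : ∀ x y, b (x, y) = b (y, x)) :
    (∑ i, evenEvenBond n b i) ∘ (· ∘ Equiv.subLeft (-1)) = ∑ i, oddOddBond n b i := by
  ext ω
  simp only [Function.comp_apply, Finset.sum_apply]
  refine Fintype.sum_equiv ((Equiv.neg _).trans (Equiv.subRight 1)) _ _ fun i => ?_
  simp only [evenEvenBond, oddOddBond, pairObs, Function.comp_apply, Equiv.subLeft_apply,
    Equiv.trans_apply, Equiv.neg_apply, Equiv.subRight_apply, map_add, map_sub, map_neg,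
    evenSite_one]
  rw [hb]
  congr! 3 <;> ring

end Bonds

section Supercell

variable {E : Type*} [Fintype E] [MeasurableSpace E] [MeasurableSingletonClass E]
  (μ : Measure E) [IsProbabilityMeasure μ] {n : ℕ} [NeZero n]

local notation "P" => Measure.pi fun _ : ZMod (2 * n) => μ

theorem covariance_sum_sum_pairObs {F G : E × E → ℝ} {p q p' q' : ZMod n → ZMod (2 * n)}
    (hXT : ∀ i k, pairObs F p q i ∘ (· ∘ Equiv.addRight (evenSite n k)) = pairObs F p q (i + k))
    (hYT : ∀ i k,
      pairObs G p' q' i ∘ (· ∘ Equiv.addRight (evenSite n k)) = pairObs G p' q' (i + k))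
    (D : Finset (ZMod n))
    (hD : ∀ d ∉ D, p 0 ≠ p' d ∧ p 0 ≠ q' d ∧ q 0 ≠ p' d ∧ q 0 ≠ q' d) :
    cov[∑ i, pairObs F p q i, ∑ j, pairObs G p' q' j; P]
      = n * ∫ ω, (pairObs F p q 0 ω - ∫ ω', pairObs F p q 0 ω' ∂P)
          * (∑ d ∈ D, pairObs G p' q' d ω - D.card * ∫ ω', pairObs G p' q' 0 ω' ∂P) ∂P := by
  have hT k := measurePreserving_comp_equiv μ (Equiv.addRight (evenSite n k))
  rw [covariance_sum_sum_of_stationary hT hXT hYT (fun _ => .of_discrete) (fun _ => .of_discrete)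
    D fun d hd => covariance_pairObs_eq_zero μ .of_discrete .of_discrete (hD d hd).1 (hD d hd).2.1
      (hD d hd).2.2.1 (hD d hd).2.2.2 .of_discrete .of_discrete,
    ZMod.card, integral_sub_mul_sum_sub D .of_discrete (fun _ _ => .of_discrete)
      fun d _ => integral_stationary hT hYT .of_discrete d]

theorem variance_sum_pairObs {F : E × E → ℝ} {p q : ZMod n → ZMod (2 * n)}
    (hXT : ∀ i k, pairObs F p q i ∘ (· ∘ Equiv.addRight (evenSite n k)) = pairObs F p q (i + k))
    (hD : ∀ d ≠ 0, p 0 ≠ p d ∧ p 0 ≠ q d ∧ q 0 ≠ p d ∧ q 0 ≠ q d) :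
    Var[∑ i, pairObs F p q i; P] = n * Var[pairObs F p q 0; P] := by
  rw [← covariance_self .of_discrete, ← covariance_self .of_discrete,
    covariance_sum_sum_pairObs μ hXT hXT {0} fun d hd => hD d (Finset.notMem_singleton.1 hd),
    covariance]
  simp only [Finset.sum_singleton, Finset.card_singleton, Nat.cast_one, one_mul]

theorem covariance_sum_evenEvenBond_sum_oddOddBond (b : E × E → ℝ) :
    cov[∑ i, evenEvenBond n b i, ∑ j, oddOddBond n b j; P] = 0 := by
  rw [covariance_sum_sum (fun _ => .of_discrete) fun _ => .of_discrete]
  refine Finset.sum_eq_zero fun i _ => Finset.sum_eq_zero fun j _ => ?_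
  refine covariance_pairObs_eq_zero μ .of_discrete .of_discrete ?_ ?_ ?_ ?_ .of_discrete
    .of_discrete <;> exact evenSite_ne_add_one n _ _

theorem variance_sum_oddOddBond (b : E × E → ℝ) :
    Var[∑ i, oddOddBond n b i; P] = Var[∑ i, evenEvenBond n b i; P] := by
  rw [← sum_evenEvenBond_comp_subRight_one]
  exact (measurePreserving_comp_equiv μ (Equiv.subRight 1)).variance_fun_comp .of_discrete

theorem covariance_sum_oddEvenBond_sum_oddOddBond {f b : E × E → ℝ}
    (hf : ∀ x y, f (x, y) = f (y, x)) (hb : ∀ x y, b (x, y) = b (y, x)) :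
    cov[∑ i, oddEvenBond n f i, ∑ i, oddOddBond n b i; P]
      = cov[∑ i, oddEvenBond n f i, ∑ i, evenEvenBond n b i; P] := by
  simpa only [sum_oddEvenBond_comp_reflect hf, sum_evenEvenBond_comp_reflect hb] using
    (measurePreserving_comp_equiv μ (Equiv.subLeft (-1))).covariance_comp
      (X := ∑ i, oddEvenBond n f i) (Y := ∑ i, evenEvenBond n b i) .of_discrete .of_discrete

theorem covariance_sum_evenOddBond_sum_oddOddBond {g b : E × E → ℝ}
    (hg : ∀ x y, g (x, y) = g (y, x)) (hb : ∀ x y, b (x, y) = b (y, x)) :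
    cov[∑ i, evenOddBond n g i, ∑ i, oddOddBond n b i; P]
      = cov[∑ i, evenOddBond n g i, ∑ i, evenEvenBond n b i; P] := by
  simpa only [sum_evenOddBond_comp_reflect hg, sum_evenEvenBond_comp_reflect hb] using
    (measurePreserving_comp_equiv μ (Equiv.subLeft (-1))).covariance_comp
      (X := ∑ i, evenOddBond n g i) (Y := ∑ i, evenEvenBond n b i) .of_discrete .of_discrete

theorem variance_sum_bonds {f g b : E × E → ℝ} (hf : ∀ x y, f (x, y) = f (y, x))
    (hg : ∀ x y, g (x, y) = g (y, x)) (hb : ∀ x y, b (x, y) = b (y, x)) (cp cm : ℝ) :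
    Var[fun ω => ∑ i, (oddEvenBond n f i ω + evenOddBond n g i ω + cp * evenEvenBond n b i ω
        + cm * oddOddBond n b i ω); P]
      = Var[∑ i, oddEvenBond n f i; P] + Var[∑ i, evenOddBond n g i; P]
        + 2 * cov[∑ i, oddEvenBond n f i, ∑ i, evenOddBond n g i; P]
        + (cp ^ 2 + cm ^ 2) * Var[∑ i, evenEvenBond n b i; P]
        + 2 * (cp + cm) * (cov[∑ i, oddEvenBond n f i, ∑ i, evenEvenBond n b i; P]
          + cov[∑ i, evenOddBond n g i, ∑ i, evenEvenBond n b i; P]) := by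
  have hsum : (fun ω => ∑ i, (oddEvenBond n f i ω + evenOddBond n g i ω
      + cp * evenEvenBond n b i ω + cm * oddOddBond n b i ω))
      = ∑ i, oddEvenBond n f i + ∑ i, evenOddBond n g i + cp • ∑ i, evenEvenBond n b i
        + cm • ∑ i, oddOddBond n b i := by
    ext ω
    simp [Finset.sum_add_distrib, Finset.mul_sum]
  have hUM := covariance_sum_oddEvenBond_sum_oddOddBond (n := n) μ hf hb
  have hVM := covariance_sum_evenOddBond_sum_oddOddBond (n := n) μ hg hb
  have hMM := variance_sum_oddOddBond (n := n) μ b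
  have hPM := covariance_sum_evenEvenBond_sum_oddOddBond (n := n) μ b
  rw [hsum, ← covariance_self .of_discrete]
  simp only [covariance_add_left .of_discrete .of_discrete .of_discrete,
    covariance_add_right .of_discrete .of_discrete .of_discrete, covariance_smul_left,
    covariance_smul_right]
  simp only [covariance_self .of_discrete]
  set SU := ∑ i, oddEvenBond n f i
  set SV := ∑ i, evenOddBond n g i
  set SP := ∑ i, evenEvenBond n b i
  set SM := ∑ i, oddOddBond n b i
  rw [covariance_comm SV SU, covariance_comm SP SU, covariance_comm SP SV, covariance_comm SM SU,
    covariance_comm SM SV, covariance_comm SM SP]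
  linear_combination 2 * cm * hUM + 2 * cm * hVM + cm ^ 2 * hMM + 2 * cp * cm * hPM

theorem variance_sum_oddEvenBond (f : E × E → ℝ) :
    Var[∑ i, oddEvenBond n f i; P] = n * Var[oddEvenBond n f 0; P] :=
  variance_sum_pairObs μ (oddEvenBond_comp_addRight f) fun _ _ => by grind

theorem variance_sum_evenOddBond (g : E × E → ℝ) :
    Var[∑ i, evenOddBond n g i; P] = n * Var[evenOddBond n g 0; P] :=
  variance_sum_pairObs μ (evenOddBond_comp_addRight g) fun _ _ => by grind

theorem variance_sum_evenEvenBond [Fact (2 < n)] (b : E × E → ℝ) :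
    Var[∑ i, evenEvenBond n b i; P]
      = n * ∫ ω, (evenEvenBond n b 0 ω - ∫ ω', evenEvenBond n b 0 ω' ∂P)
          * (evenEvenBond n b (-1) ω + evenEvenBond n b 0 ω + evenEvenBond n b 1 ω
            - 3 * ∫ ω', evenEvenBond n b 0 ω' ∂P) ∂P := by
  have : Fact (1 < n) := ⟨(Fact.out : 2 < n).trans' one_lt_two⟩
  have h : (-1 : ZMod n) ∉ ({0, 1} : Finset (ZMod n)) := by simp [ZMod.neg_one_ne_one]
  rw [← covariance_self .of_discrete, covariance_sum_sum_pairObs μ (evenEvenBond_comp_addRight b)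
    (evenEvenBond_comp_addRight b) {-1, 0, 1} fun _ _ => by grind]
  simp only [Finset.sum_insert h, Finset.card_insert_of_notMem h, Finset.sum_pair zero_ne_one,
    Finset.card_pair zero_ne_one, ← add_assoc, Nat.reduceAdd, Nat.cast_ofNat]

theorem covariance_sum_oddEvenBond_sum_evenOddBond [Fact (1 < n)] (f g : E × E → ℝ) :
    cov[∑ i, oddEvenBond n f i, ∑ i, evenOddBond n g i; P]
      = n * ∫ ω, (oddEvenBond n f 0 ω - ∫ ω', oddEvenBond n f 0 ω' ∂P)
          * (evenOddBond n g 0 ω + evenOddBond n g (-1) ω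
            - 2 * ∫ ω', evenOddBond n g 0 ω' ∂P) ∂P := by
  have h : (0 : ZMod n) ≠ -1 := (neg_ne_zero.2 one_ne_zero).symm
  rw [covariance_sum_sum_pairObs μ (oddEvenBond_comp_addRight f) (evenOddBond_comp_addRight g)
    {0, -1} fun _ _ => by grind]
  simp only [Finset.sum_pair h, Finset.card_pair h, Nat.cast_ofNat]

theorem covariance_sum_oddEvenBond_sum_evenEvenBond [Fact (1 < n)] (f b : E × E → ℝ) :
    cov[∑ i, oddEvenBond n f i, ∑ i, evenEvenBond n b i; P]
      = n * ∫ ω, (oddEvenBond n f 0 ω - ∫ ω', oddEvenBond n f 0 ω' ∂P)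
          * (evenEvenBond n b (-1) ω + evenEvenBond n b 0 ω
            - 2 * ∫ ω', evenEvenBond n b 0 ω' ∂P) ∂P := by
  have h : (-1 : ZMod n) ≠ 0 := neg_ne_zero.2 one_ne_zero
  rw [covariance_sum_sum_pairObs μ (oddEvenBond_comp_addRight f) (evenEvenBond_comp_addRight b)
    {-1, 0} fun _ _ => by grind]
  simp only [Finset.sum_pair h, Finset.card_pair h, Nat.cast_ofNat]

theorem covariance_sum_evenOddBond_sum_evenEvenBond [Fact (1 < n)] (g b : E × E → ℝ) :
    cov[∑ i, evenOddBond n g i, ∑ i, evenEvenBond n b i; P]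
      = n * ∫ ω, (evenOddBond n g 0 ω - ∫ ω', evenOddBond n g 0 ω' ∂P)
          * (evenEvenBond n b (-1) ω + evenEvenBond n b 0 ω
            - 2 * ∫ ω', evenEvenBond n b 0 ω' ∂P) ∂P := by
  have h : (-1 : ZMod n) ≠ 0 := neg_ne_zero.2 one_ne_zero
  rw [covariance_sum_sum_pairObs μ (evenOddBond_comp_addRight g) (evenEvenBond_comp_addRight b)
    {-1, 0} fun _ _ => by grind]
  simp only [Finset.sum_pair h, Finset.card_pair h, Nat.cast_ofNat]

end Supercell

/-- **Variance of the total Peierls-Nabarro energy of a supercell**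
(Eqs. (6.2)-(6.9) of the paper).  For a cyclic supercell of `2 n` i.i.d. lattice sites with
misfit bond energies `U i, V i`, stiffness coefficients `β⁺ i, β⁻ i` and elastic weights
`c₊, c₋`, the variance of the total supercell energy fluctuation is
`Var (Σ_i (U i + V i + c₊ β⁺ i + c₋ β⁻ i))
  = n (σ_uu + σ_vv + 2 σ_uv + (c₊² + c₋²) σ_ββ + 2 (c₊ + c₋)(σ_βu + σ_βv))`. -/
theorem variance_supercell_total_energy
    {E : Type*} [Fintype E] [MeasurableSpace E] [MeasurableSingletonClass E]
    (μ : Measure E) [IsProbabilityMeasure μ]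
    (n : ℕ) (hn : 3 ≤ n) (f g b : E × E → ℝ)
    (hf : ∀ x y, f (x, y) = f (y, x)) (hg : ∀ x y, g (x, y) = g (y, x))
    (hb : ∀ x y, b (x, y) = b (y, x))
    (cp cm : ℝ) :
    letI : NeZero n := ⟨by omega⟩
    letI : NeZero (2 * n) := ⟨by omega⟩
    ∀ U V βp βm : ZMod n → (ZMod (2 * n) → E) → ℝ,
      (∀ i ω, U i ω = f (ω (2 * (i.val : ZMod (2 * n)) - 1), ω (2 * (i.val : ZMod (2 * n))))) →
      (∀ i ω, V i ω = g (ω (2 * (i.val : ZMod (2 * n))), ω (2 * (i.val : ZMod (2 * n)) + 1))) →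
      (∀ i ω, βp i ω = b (ω (2 * (i.val : ZMod (2 * n))), ω (2 * (i.val : ZMod (2 * n)) + 2))) →
      (∀ i ω, βm i ω = b (ω (2 * (i.val : ZMod (2 * n)) - 1), ω (2 * (i.val : ZMod (2 * n)) + 1))) →
      -- `P` is the product measure: the `2 n` lattice sites are i.i.d. with law `μ`
      let P : Measure (ZMod (2 * n) → E) := Measure.pi fun _ => μ
      let Ubar : ℝ := ∫ ω, U 0 ω ∂P
      let Vbar : ℝ := ∫ ω, V 0 ω ∂P
      let βbar : ℝ := ∫ ω, βp 0 ω ∂P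
      let σuu : ℝ := variance (U 0) P
      let σvv : ℝ := variance (V 0) P
      let σuv : ℝ := ∫ ω, (U 0 ω - Ubar) * (V 0 ω + V (-1) ω - 2 * Vbar) ∂P
      let σββ : ℝ := ∫ ω, (βp 0 ω - βbar) * (βp (-1) ω + βp 0 ω + βp 1 ω - 3 * βbar) ∂P
      let σβu : ℝ := ∫ ω, (U 0 ω - Ubar) * (βp (-1) ω + βp 0 ω - 2 * βbar) ∂P
      let σβv : ℝ := ∫ ω, (V 0 ω - Vbar) * (βp (-1) ω + βp 0 ω - 2 * βbar) ∂P
      variance (fun ω => ∑ i : ZMod n, (U i ω + V i ω + cp * βp i ω + cm * βm i ω)) P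
        = (n : ℝ) * (σuu + σvv + 2 * σuv + (cp ^ 2 + cm ^ 2) * σββ
            + 2 * (cp + cm) * (σβu + σβv)) := by
  have : Fact (1 < n) := ⟨by omega⟩
  have : Fact (2 < n) := ⟨hn⟩
  intro U V βp βm hU hV hβp hβm
  obtain rfl : U = oddEvenBond n f :=
    funext₂ fun i ω => (hU i ω).trans (oddEvenBond_apply f i ω).symm
  obtain rfl : V = evenOddBond n g :=
    funext₂ fun i ω => (hV i ω).trans (evenOddBond_apply g i ω).symm
  obtain rfl : βp = evenEvenBond n b :=
    funext₂ fun i ω => (hβp i ω).trans (evenEvenBond_apply b i ω).symm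
  obtain rfl : βm = oddOddBond n b :=
    funext₂ fun i ω => (hβm i ω).trans (oddOddBond_apply b i ω).symm
  dsimp only
  rw [variance_sum_bonds μ hf hg hb, variance_sum_oddEvenBond, variance_sum_evenOddBond,
    variance_sum_evenEvenBond, covariance_sum_oddEvenBond_sum_evenOddBond,
    covariance_sum_oddEvenBond_sum_evenEvenBond, covariance_sum_evenOddBond_sum_evenEvenBond]
  ring
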